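/- Suppose the l-th diagonal entry [A_{jk}]_{ll} is strictly positive for all users j, k and all streams l = 1,…,L_j, and let P_max > 0. Let F be the set of power allocations p with p_{kl} ≥ 0 for all k, l and Σ_{k=1}^K Σ_{l=1}^{L_k} p_{kl} ≤ P_max. If p* ∈ F attains the maximum over F of min_{1≤k≤K} SINR̄_k(p)/γ_k, then the optimum uses the full available power: Σ_{k=1}^K Σ_{l=1}^{L_k} p*_{kl} = P_max. -/

import Mathlib

/-!
If the optimum left some power unused, scaling it up by `c = P_max / Σ p*` would be feasible and
would multiply every signal and every interference term by `c > 1` while the noise stays fixed,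
so every SINR, hence the minimum, would strictly grow. This needs every signal power at `p*`
to be positive: otherwise the minimum at `p*` would be `0`, while the uniform allocation makes
every SINR positive.
-/

open Matrix Finset

noncomputable def Amat {K M : ℕ} {N L : Fin K → ℕ}
    (H : ∀ k : Fin K, Matrix (Fin M) (Fin (N k)) ℂ)
    (U : ∀ j : Fin K, Matrix (Fin M) (Fin (L j)) ℂ)
    (V : ∀ k : Fin K, Matrix (Fin (N k)) (Fin (L k)) ℂ)
    (j k : Fin K) : Matrix (Fin (L j)) (Fin (L j)) ℂ :=
  (U j)ᴴ * H k * V k * (V k)ᴴ * (H k)ᴴ * U j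

/-- The real diagonal entry `[A_{jk}]_{ll}`. -/
noncomputable def Adiag {K M : ℕ} {N L : Fin K → ℕ}
    (H : ∀ k : Fin K, Matrix (Fin M) (Fin (N k)) ℂ)
    (U : ∀ j : Fin K, Matrix (Fin M) (Fin (L j)) ℂ)
    (V : ∀ k : Fin K, Matrix (Fin (N k)) (Fin (L k)) ℂ)
    (j k : Fin K) (l : Fin (L j)) : ℝ :=
  (Amat H U V j k l l).re

/-- The average downlink SINR of user `k` under power allocation `p`. -/
noncomputable def avgSINR {K M : ℕ} {N L : Fin K → ℕ}
    (H : ∀ k : Fin K, Matrix (Fin M) (Fin (N k)) ℂ)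
    (U : ∀ j : Fin K, Matrix (Fin M) (Fin (L j)) ℂ)
    (V : ∀ k : Fin K, Matrix (Fin (N k)) (Fin (L k)) ℂ)
    (σsq : ℝ) (p : ∀ k : Fin K, Fin (L k) → ℝ) (k : Fin K) : ℝ :=
  (∑ l, p k l * Adiag H U V k k l) /
    ((∑ j ∈ univ.erase k, ∑ l, p j l * Adiag H U V j k l) + (L k : ℝ) * σsq)

theorem Finset.inf'_lt_inf'_of_forall_lt {ι α : Type*} [LinearOrder α] {s : Finset ι}
    (hs : s.Nonempty) {f g : ι → α} (h : ∀ i ∈ s, f i < g i) : s.inf' hs f < s.inf' hs g :=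
  (lt_inf'_iff hs).2 fun i hi => (inf'_le f hi).trans_lt (h i hi)

theorem div_add_lt_mul_div_mul_add {𝕜 : Type*} [Field 𝕜] [LinearOrder 𝕜] [IsStrictOrderedRing 𝕜]
    {a b e c : 𝕜} (ha : 0 < a) (hb : 0 ≤ b) (he : 0 < e) (hc : 1 < c) :
    a / (b + e) < c * a / (c * b + e) := by
  have hcb : 0 ≤ c * b := mul_nonneg (by linarith) hb
  rw [div_lt_div_iff₀ (by linarith) (by linarith)]
  nlinarith [mul_pos (mul_pos ha he) (sub_pos.2 hc)]

section Downlink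

variable {K M : ℕ} {N L : Fin K → ℕ}
  (H : ∀ k : Fin K, Matrix (Fin M) (Fin (N k)) ℂ)
  (U : ∀ j : Fin K, Matrix (Fin M) (Fin (L j)) ℂ)
  (V : ∀ k : Fin K, Matrix (Fin (N k)) (Fin (L k)) ℂ)

noncomputable def signalPower (p : ∀ k : Fin K, Fin (L k) → ℝ) (k : Fin K) : ℝ :=
  ∑ l, p k l * Adiag H U V k k l

noncomputable def interferencePower (p : ∀ k : Fin K, Fin (L k) → ℝ) (k : Fin K) : ℝ :=
  ∑ j ∈ univ.erase k, ∑ l, p j l * Adiag H U V j k l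

theorem avgSINR_eq (σsq : ℝ) (p : ∀ k : Fin K, Fin (L k) → ℝ) (k : Fin K) :
    avgSINR H U V σsq p k =
      signalPower H U V p k / (interferencePower H U V p k + (L k : ℝ) * σsq) :=
  rfl

theorem signalPower_smul (c : ℝ) (p : ∀ k : Fin K, Fin (L k) → ℝ) (k : Fin K) :
    signalPower H U V (c • p) k = c * signalPower H U V p k := by
  simp only [signalPower, Pi.smul_apply, smul_eq_mul, mul_sum, mul_assoc]

theorem interferencePower_smul (c : ℝ) (p : ∀ k : Fin K, Fin (L k) → ℝ) (k : Fin K) :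
    interferencePower H U V (c • p) k = c * interferencePower H U V p k := by
  simp only [interferencePower, Pi.smul_apply, smul_eq_mul, mul_sum, mul_assoc]

theorem interferencePower_nonneg (hA : ∀ j k : Fin K, ∀ l : Fin (L j), 0 ≤ Adiag H U V j k l)
    {p : ∀ k : Fin K, Fin (L k) → ℝ} (hp : ∀ k l, 0 ≤ p k l) (k : Fin K) :
    0 ≤ interferencePower H U V p k :=
  sum_nonneg fun j _ => sum_nonneg fun l _ => mul_nonneg (hp j l) (hA j k l)

theorem signalPower_pos {k : Fin K} (hL : 1 ≤ L k) (hA : ∀ l, 0 < Adiag H U V k k l)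
    {p : ∀ k : Fin K, Fin (L k) → ℝ} (hp : ∀ l, 0 < p k l) : 0 < signalPower H U V p k :=
  sum_pos (fun l _ => mul_pos (hp l) (hA l)) (univ_nonempty_iff.2 ⟨⟨0, hL⟩⟩)

theorem sum_sum_pos_of_signalPower_pos {p : ∀ k : Fin K, Fin (L k) → ℝ} (hp : ∀ k l, 0 ≤ p k l)
    {k : Fin K} (hk : 0 < signalPower H U V p k) : 0 < ∑ k, ∑ l, p k l := by
  obtain ⟨l, -, hl⟩ := exists_ne_zero_of_sum_ne_zero hk.ne'
  have hpl : 0 < p k l := (hp k l).lt_of_ne (left_ne_zero_of_mul hl).symm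
  calc 0 < p k l := hpl
    _ ≤ ∑ l, p k l := single_le_sum (fun l _ => hp k l) (mem_univ l)
    _ ≤ ∑ k, ∑ l, p k l :=
      single_le_sum (f := fun k => ∑ l, p k l) (fun k _ => sum_nonneg fun l _ => hp k l)
        (mem_univ k)

variable {σsq : ℝ} (hσ : 0 < σsq) (hL : ∀ k, 1 ≤ L k)
include hσ hL

theorem avgSINR_pos (hA : ∀ j k : Fin K, ∀ l : Fin (L j), 0 ≤ Adiag H U V j k l)
    {p : ∀ k : Fin K, Fin (L k) → ℝ} (hp : ∀ k l, 0 ≤ p k l) {k : Fin K}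
    (hk : 0 < signalPower H U V p k) : 0 < avgSINR H U V σsq p k :=
  div_pos hk <| add_pos_of_nonneg_of_pos (interferencePower_nonneg H U V hA hp k)
    (mul_pos (Nat.cast_pos.2 (hL k)) hσ)

theorem avgSINR_lt_avgSINR_smul (hA : ∀ j k : Fin K, ∀ l : Fin (L j), 0 ≤ Adiag H U V j k l)
    {p : ∀ k : Fin K, Fin (L k) → ℝ} (hp : ∀ k l, 0 ≤ p k l) {k : Fin K}
    (hk : 0 < signalPower H U V p k) {c : ℝ} (hc : 1 < c) :
    avgSINR H U V σsq p k < avgSINR H U V σsq (c • p) k := by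
  rw [avgSINR_eq, avgSINR_eq, signalPower_smul, interferencePower_smul]
  exact div_add_lt_mul_div_mul_add hk (interferencePower_nonneg H U V hA hp k)
    (mul_pos (Nat.cast_pos.2 (hL k)) hσ) hc

theorem exists_feasible_forall_avgSINR_pos (hK : 0 < K)
    (hA : ∀ j k : Fin K, ∀ l : Fin (L j), 0 < Adiag H U V j k l) {Pmax : ℝ} (hP : 0 < Pmax) :
    ∃ q : ∀ k : Fin K, Fin (L k) → ℝ, (∀ k l, 0 ≤ q k l) ∧ ∑ k, ∑ l, q k l ≤ Pmax ∧
      ∀ k, 0 < avgSINR H U V σsq q k := by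
  have hT : 0 < ∑ k, (L k : ℝ) := sum_pos (fun k _ => Nat.cast_pos.2 (hL k)) ⟨⟨0, hK⟩, mem_univ _⟩
  set δ := Pmax / ∑ k, (L k : ℝ)
  have hδ : 0 < δ := div_pos hP hT
  refine ⟨fun _ _ => δ, fun _ _ => hδ.le, ?_, fun k => ?_⟩
  · refine le_of_eq ?_
    calc ∑ k, ∑ _ : Fin (L k), δ = (∑ k, (L k : ℝ)) * δ := by simp [sum_mul]
      _ = Pmax := mul_div_cancel₀ _ hT.ne'
  · exact avgSINR_pos H U V hσ hL (fun j k l => (hA j k l).le) (fun _ _ => hδ.le)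
      (signalPower_pos H U V (hL k) (hA k k) fun _ => hδ)

end Downlink

/-- the max–min optimum uses the full available power. -/
theorem full_power_at_max_min_optimum {K M : ℕ} {N L : Fin K → ℕ}
    (hK : 0 < K) (hL : ∀ k, 1 ≤ L k)
    (H : ∀ k : Fin K, Matrix (Fin M) (Fin (N k)) ℂ)
    (U : ∀ j : Fin K, Matrix (Fin M) (Fin (L j)) ℂ)
    (V : ∀ k : Fin K, Matrix (Fin (N k)) (Fin (L k)) ℂ)
    (σsq : ℝ) (hσ : 0 < σsq)
    (γ : Fin K → ℝ) (hγ : ∀ k, 0 < γ k)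
    (hA : ∀ j k : Fin K, ∀ l : Fin (L j), 0 < Adiag H U V j k l)
    (Pmax : ℝ) (hP : 0 < Pmax)
    (pstar : ∀ k : Fin K, Fin (L k) → ℝ)
    (hstar_nonneg : ∀ k l, 0 ≤ pstar k l)
    (hstar_sum : ∑ k, ∑ l, pstar k l ≤ Pmax)
    (hopt : ∀ p : ∀ k : Fin K, Fin (L k) → ℝ, (∀ k l, 0 ≤ p k l) →
      (∑ k, ∑ l, p k l ≤ Pmax) →
      univ.inf' (Finset.univ_nonempty_iff.mpr (Fin.pos_iff_nonempty.mp hK))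
        (fun k => avgSINR H U V σsq p k / γ k) ≤
      univ.inf' (Finset.univ_nonempty_iff.mpr (Fin.pos_iff_nonempty.mp hK))
        (fun k => avgSINR H U V σsq pstar k / γ k)) :
    ∑ k, ∑ l, pstar k l = Pmax := by
  have hne : (univ : Finset (Fin K)).Nonempty := univ_nonempty_iff.2 ⟨⟨0, hK⟩⟩
  have hA0 : ∀ j k : Fin K, ∀ l : Fin (L j), 0 ≤ Adiag H U V j k l := fun j k l => (hA j k l).le
  have hsignal : ∀ k, 0 < signalPower H U V pstar k := by
    by_contra! ⟨k, hk⟩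
    have hzero : signalPower H U V pstar k = 0 :=
      hk.antisymm (sum_nonneg fun l _ => mul_nonneg (hstar_nonneg k l) (hA0 k k l))
    obtain ⟨q, hq0, hqP, hqpos⟩ := exists_feasible_forall_avgSINR_pos H U V hσ hL hK hA hP
    have hopt_nonpos : univ.inf' hne (fun k => avgSINR H U V σsq pstar k / γ k) ≤ 0 :=
      (inf'_le _ (mem_univ k)).trans (by rw [avgSINR_eq, hzero, zero_div, zero_div])
    have hq_pos : 0 < univ.inf' hne (fun k => avgSINR H U V σsq q k / γ k) :=
      (lt_inf'_iff hne).2 fun k _ => div_pos (hqpos k) (hγ k)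
    exact (hopt q hq0 hqP).not_gt (hopt_nonpos.trans_lt hq_pos)
  refine hstar_sum.antisymm (not_lt.1 fun hlt => ?_)
  set S := ∑ k, ∑ l, pstar k l
  have hS : 0 < S := sum_sum_pos_of_signalPower_pos H U V hstar_nonneg (hsignal ⟨0, hK⟩)
  have hc : 1 < Pmax / S := (one_lt_div hS).2 hlt
  have hfeas : ∑ k, ∑ l, ((Pmax / S) • pstar) k l ≤ Pmax := by
    simp only [Pi.smul_apply, smul_eq_mul, ← mul_sum]
    exact (div_mul_cancel₀ Pmax hS.ne').le
  refine (hopt _ (fun k l => mul_nonneg (by linarith) (hstar_nonneg k l)) hfeas).not_gt ?_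
  exact inf'_lt_inf'_of_forall_lt hne fun k _ => div_lt_div_of_pos_right
    (avgSINR_lt_avgSINR_smul H U V hσ hL hA0 hstar_nonneg (hsignal k) hc) (hγ k)
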